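/- arXiv:math/0703611 — 4 statements merged into one kernel-verified Lean document; each statement's English description precedes it below -/
import Mathlib

section
/- Let F = (ZMod 2)[X]/(X² + X + 1) be the field with four elements and t the image of X, so that 1 − t = 1 + t and t·(1 + t) = 1. Equip F with the Alexander quandle operation x ▷ y = t·x + (1−t)·y. Then the function f : F × F → F defined by f(x,y) = (x − y)²·y is a quandle 2-cocycle: f(x,y) − f(x,z) + f(x ▷ y, z) − f(x ▷ z, y ▷ z) = 0 for all x, y, z ∈ F, and f(x,x) = 0 for all x ∈ F. -/
open Polynomial

def IsQuandleTwoCocycle {Q A : Type*} [AddCommGroup A] (op : Q → Q → Q) (φ : Q → Q → A) :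
    Prop :=
  (∀ x y z, φ x y - φ x z + φ (op x y) z - φ (op x z) (op y z) = 0) ∧ ∀ x, φ x x = 0

theorem AdjoinRoot.root_sq_add_root_add_one (R : Type*) [CommRing R] :
    root (X ^ 2 + X + 1 : R[X]) ^ 2 + root (X ^ 2 + X + 1 : R[X]) + 1 = 0 := by
  have h := eval₂_root (X ^ 2 + X + 1 : R[X])
  rwa [eval₂_add, eval₂_add, eval₂_pow, eval₂_X, eval₂_one] at h

section CharTwo

variable {R : Type*} [CommRing R] {t : R}

theorem mul_one_add_eq_one_of_sq_add_add_one_eq_zero (h2 : (2 : R) = 0)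
    (ht : t ^ 2 + t + 1 = 0) : t * (1 + t) = 1 := by
  linear_combination ht - h2

theorem isQuandleTwoCocycle_sub_sq_mul (h2 : (2 : R) = 0) (ht : t ^ 2 + t + 1 = 0) :
    IsQuandleTwoCocycle (fun x y : R => t * x + (1 - t) * y) (fun x y => (x - y) ^ 2 * y) := by
  refine ⟨fun x y z => ?_, fun x => by ring⟩
  linear_combination (1 - t) * (x - y) ^ 2 * (y - z) * ht + (1 - t) * (x - y) * (z - y) * z * h2

end CharTwo

/-- Let `F = (ZMod 2)[X]/(X² + X + 1)` be the field with four elements and `t` the image of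
`X`, so that `1 - t = 1 + t` and `t * (1 + t) = 1`. With the Alexander operation
`x ▷ y = t * x + (1 - t) * y`, the function `f(x, y) = (x - y)² * y` is a quandle
2-cocycle. -/
theorem two_cocycle_on_F4 :
    let F := AdjoinRoot (X ^ 2 + X + 1 : Polynomial (ZMod 2))
    let t : F := AdjoinRoot.root (X ^ 2 + X + 1 : Polynomial (ZMod 2))
    let op : F → F → F := fun x y => t * x + (1 - t) * y
    let f : F → F → F := fun x y => (x - y) ^ 2 * y
    (1 - t = 1 + t) ∧ (t * (1 + t) = 1) ∧
    (∀ x y z : F, f x y - f x z + f (op x y) z - f (op x z) (op y z) = 0) ∧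
    (∀ x : F, f x x = 0) := by
  intro F t op f
  have h2 : (2 : F) = 0 := by
    rw [← map_ofNat (algebraMap (ZMod 2) F) 2, show (2 : ZMod 2) = 0 from rfl, map_zero]
  have ht : t ^ 2 + t + 1 = 0 := AdjoinRoot.root_sq_add_root_add_one (ZMod 2)
  exact ⟨by linear_combination (-t) * h2, mul_one_add_eq_one_of_sq_add_add_one_eq_zero h2 ht,
    isQuandleTwoCocycle_sub_sq_mul h2 ht⟩
end

section
/- Let p be a prime, let R = (ZMod p)[X]/(X² − X + 1) with t the image of X (a unit since t·(1 − t) = 1), and equip R with the Alexander quandle operation x ▷ y = t·x + (1−t)·y. Then the function f : R × R × R → R defined by f(x,y,z) = (x − y)·(y − z)^p is a quandle 3-cocycle: f(x,z,w) − f(x,y,w) + f(x,y,z) − f(x▷y, z, w) + f(x▷z, y▷z, w) − f(x▷w, y▷w, z▷w) = 0 for all x, y, z, w ∈ R, and f(x,x,y) = 0 = f(x,y,y) for all x, y ∈ R. -/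
open Polynomial

/-- Let `R = (ZMod p)[X]/(X² - X + 1)` with `t` the image of `X` (a unit, since
`t * (1 - t) = 1`), with the Alexander operation `x ▷ y = t * x + (1 - t) * y`. Then
`f(x, y, z) = (x - y) * (y - z)^p` is a quandle 3-cocycle. -/
theorem three_cocycle_on_alexander (p : ℕ) (hp : p.Prime) :
    let R := AdjoinRoot (X ^ 2 - X + 1 : Polynomial (ZMod p))
    let t : R := AdjoinRoot.root (X ^ 2 - X + 1 : Polynomial (ZMod p))
    let op : R → R → R := fun x y => t * x + (1 - t) * y
    let f : R → R → R → R := fun x y z => (x - y) * (y - z) ^ p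
    (t * (1 - t) = 1) ∧
    (∀ x y z w : R,
      f x z w - f x y w + f x y z - f (op x y) z w + f (op x z) (op y z) w
        - f (op x w) (op y w) (op z w) = 0) ∧
    (∀ x y : R, f x x y = 0 ∧ f x y y = 0) := by
  haveI : Fact p.Prime := ⟨hp⟩
  intro R t op f
  have hdeg : (X ^ 2 - X + 1 : Polynomial (ZMod p)).degree ≠ 0 := by
    have : (X ^ 2 - X + 1 : Polynomial (ZMod p)).degree = 2 := by
      compute_degree!
    simp [this]
  haveI : Nontrivial R := AdjoinRoot.nontrivial _ hdeg
  haveI : CharP R p := charP_of_injective_algebraMap' (A := R) (ZMod p) p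
  have ht : t ^ 2 - t + 1 = 0 := by
    have := AdjoinRoot.eval₂_root (X ^ 2 - X + 1 : Polynomial (ZMod p))
    simpa using this
  refine ⟨by linear_combination -ht, ?_, ?_⟩
  · intro x y z w
    show (x - z) * (z - w) ^ p - (x - y) * (y - w) ^ p + (x - y) * (y - z) ^ p
      - (t * x + (1 - t) * y - z) * (z - w) ^ p
      + (t * x + (1 - t) * z - (t * y + (1 - t) * z)) * (t * y + (1 - t) * z - w) ^ p
      - (t * x + (1 - t) * w - (t * y + (1 - t) * w))
        * (t * y + (1 - t) * w - (t * z + (1 - t) * w)) ^ p = 0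
    have h1 : (y - w) ^ p = (y - z) ^ p + (z - w) ^ p := by
      rw [show y - w = (y - z) + (z - w) by ring, add_pow_char]
    have h2 : t * y + (1 - t) * z - w = t * (y - z) + (z - w) := by ring
    have h3 : (t * (y - z) + (z - w)) ^ p = t ^ p * (y - z) ^ p + (z - w) ^ p := by
      rw [add_pow_char, mul_pow]
    rw [h1, h2, h3, show t * y + (1 - t) * w - (t * z + (1 - t) * w) = t * (y - z)
      from by ring, mul_pow]
    ring
  · intro x y
    constructor
    · show (x - x) * (x - y) ^ p = 0
      simp
    · show (x - y) * (y - y) ^ p = 0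
      simp [zero_pow hp.ne_zero]
end

section
/- Let p be an odd prime. Define ψ : (ZMod p)³ → ZMod p by choosing integer representatives x̄, ȳ, z̄ of x, y, z and setting ψ(x,y,z) to be the image in ZMod p of the integer (x̄ − ȳ)·(((2·z̄^p − ȳ^p) − (2·z̄ − ȳ)^p)/p), where the division by p is exact. Then ψ is a quandle 3-cocycle of the dihedral quandle R_p (ZMod p with i ▷ j = 2j − i): ψ(x,z,w) − ψ(x,y,w) + ψ(x,y,z) − ψ(x▷y, z, w) + ψ(x▷z, y▷z, w) − ψ(x▷w, y▷w, z▷w) = 0 for all x, y, z, w ∈ ZMod p, and ψ(x,x,y) = 0 = ψ(x,y,y) for all x, y ∈ ZMod p. -/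
/-!
Over any commutative ring, `Φ(x, y, z) = (x - y) * ((2z^n - y^n) - (2z - y)^n)` satisfies the
3-cocycle identity of the dihedral operation `x ▷ y = 2y - x` as a polynomial identity.
For `n = p` the second factor is divisible by `p` (Fermat), so `Φ / p` is again an integral cocycle;
and since `a ≡ b [ZMOD p]` implies `a^p ≡ b^p [ZMOD p^2]`, the class of `Φ / p` mod `p` only
depends on the residues of `x, y, z`. Hence `ψ` is the reduction of an integral cocycle.
-/

/-- Mochizuki's 3-cocycle `ψ(x,y,z) = (x - y) * ((2z^p - y^p) - (2z - y)^p) / p` of the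
dihedral quandle `R_p`, computed from the integer representatives given by `ZMod.val`
(the division by `p` is exact). -/
def mochizukiCocycle (p : ℕ) (x y z : ZMod p) : ZMod p :=
  ((((x.val : ℤ) - (y.val : ℤ)) *
      (((2 * (z.val : ℤ) ^ p - (y.val : ℤ) ^ p) -
          (2 * (z.val : ℤ) - (y.val : ℤ)) ^ p) / (p : ℤ)) : ℤ) : ZMod p)

section Dihedral

variable {R S M : Type*} [CommRing R] [CommRing S] [AddCommGroup M]

def dihedralCocycleDefect (θ : R → R → R → M) (x y z w : R) : M :=
  θ x z w - θ x y w + θ x y z - θ (2 * y - x) z w + θ (2 * z - x) (2 * z - y) w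
    - θ (2 * w - x) (2 * w - y) (2 * w - z)

theorem dihedralCocycleDefect_map (f : R →+* S) {θ : R → R → R → R} {ψ : S → S → S → S}
    (h : ∀ x y z, ψ (f x) (f y) (f z) = f (θ x y z)) (x y z w : R) :
    dihedralCocycleDefect ψ (f x) (f y) (f z) (f w) = f (dihedralCocycleDefect θ x y z w) := by
  simp only [dihedralCocycleDefect, map_sub, map_add, ← h, map_mul, map_ofNat]

def mochizukiPoly (n : ℕ) (y z : R) : R := 2 * z ^ n - y ^ n - (2 * z - y) ^ n

theorem mochizukiPoly_self (n : ℕ) (y : R) : mochizukiPoly n y y = 0 := by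
  simp only [mochizukiPoly]; ring

theorem dihedralCocycleDefect_mochizukiPoly (n : ℕ) (x y z w : R) :
    dihedralCocycleDefect (fun x y z => (x - y) * mochizukiPoly n y z) x y z w = 0 := by
  simp only [dihedralCocycleDefect, mochizukiPoly]; ring

end Dihedral

section Integral

variable {p : ℕ}

theorem Int.dvd_mochizukiPoly (hp : p.Prime) (y z : ℤ) : (p : ℤ) ∣ mochizukiPoly p y z := by
  have : Fact p.Prime := ⟨hp⟩
  rw [← ZMod.intCast_zmod_eq_zero_iff_dvd]
  push_cast [mochizukiPoly]
  rw [ZMod.pow_card, ZMod.pow_card, ZMod.pow_card]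
  ring

theorem Int.sq_dvd_mochizukiPoly_sub {y y' z z' : ℤ} (hy : y ≡ y' [ZMOD p])
    (hz : z ≡ z' [ZMOD p]) : (p : ℤ) ^ 2 ∣ mochizukiPoly p y z - mochizukiPoly p y' z' := by
  have sq_dvd_pow_sub {a b : ℤ} (h : a ≡ b [ZMOD p]) : (p : ℤ) ^ 2 ∣ a ^ p - b ^ p := by
    simpa using dvd_sub_pow_of_dvd_sub (Int.ModEq.dvd h.symm) 1
  have h2zy := sq_dvd_pow_sub ((hz.mul_left 2).sub hy)
  have hexpand : mochizukiPoly p y z - mochizukiPoly p y' z' =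
      2 * (z ^ p - z' ^ p) - (y ^ p - y' ^ p) - ((2 * z - y) ^ p - (2 * z' - y') ^ p) := by
    simp only [mochizukiPoly]; ring
  rw [hexpand]
  exact (((sq_dvd_pow_sub hz).mul_left 2).sub (sq_dvd_pow_sub hy)).sub h2zy

def mochizukiLift (p : ℕ) (x y z : ℤ) : ℤ := (x - y) * (mochizukiPoly p y z / p)

theorem mul_mochizukiLift (hp : p.Prime) (x y z : ℤ) :
    p * mochizukiLift p x y z = (x - y) * mochizukiPoly p y z := by
  rw [mochizukiLift, mul_left_comm, Int.mul_ediv_cancel' (Int.dvd_mochizukiPoly hp y z)]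

theorem mochizukiLift_modEq (hp : p.Prime) {x x' y y' z z' : ℤ} (hx : x ≡ x' [ZMOD p])
    (hy : y ≡ y' [ZMOD p]) (hz : z ≡ z' [ZMOD p]) :
    mochizukiLift p x y z ≡ mochizukiLift p x' y' z' [ZMOD p] := by
  have hp0 : (p : ℤ) ≠ 0 := by exact_mod_cast hp.ne_zero
  obtain ⟨q, hq⟩ := Int.dvd_mochizukiPoly hp y z
  obtain ⟨q', hq'⟩ := Int.dvd_mochizukiPoly hp y' z'
  have hquot : q ≡ q' [ZMOD p] := by
    refine Int.ModEq.symm (Int.modEq_iff_dvd.mpr ?_)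
    have h := Int.sq_dvd_mochizukiPoly_sub hy hz
    rw [hq, hq', ← mul_sub, sq] at h
    exact (mul_dvd_mul_iff_left hp0).mp h
  simp only [mochizukiLift, hq, hq', Int.mul_ediv_cancel_left _ hp0]
  exact (hx.sub hy).mul hquot

theorem dihedralCocycleDefect_mochizukiLift (hp : p.Prime) (x y z w : ℤ) :
    dihedralCocycleDefect (mochizukiLift p) x y z w = 0 := by
  have hp0 : (p : ℤ) ≠ 0 := by exact_mod_cast hp.ne_zero
  apply mul_left_cancel₀ hp0
  simp only [dihedralCocycleDefect, mul_sub, mul_add, mul_zero, mul_mochizukiLift hp]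
  exact dihedralCocycleDefect_mochizukiPoly p x y z w

theorem mochizukiCocycle_intCast (hp : p.Prime) (x y z : ℤ) :
    mochizukiCocycle p x y z = mochizukiLift p x y z := by
  have : NeZero p := ⟨hp.ne_zero⟩
  have val_modEq (a : ℤ) : ((a : ZMod p).val : ℤ) ≡ a [ZMOD p] := by
    rw [ZMod.val_intCast]; exact Int.mod_modEq a p
  exact (ZMod.intCast_eq_intCast_iff _ _ p).mpr
    (mochizukiLift_modEq hp (val_modEq x) (val_modEq y) (val_modEq z))

end Integral

theorem mochizuki_is_three_cocycle_general (p : ℕ) (hp : p.Prime) :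
    (∀ x y z w : ZMod p,
      mochizukiCocycle p x z w - mochizukiCocycle p x y w + mochizukiCocycle p x y z
        - mochizukiCocycle p (2 * y - x) z w
        + mochizukiCocycle p (2 * z - x) (2 * z - y) w
        - mochizukiCocycle p (2 * w - x) (2 * w - y) (2 * w - z) = 0) ∧
    (∀ x y : ZMod p, mochizukiCocycle p x x y = 0 ∧ mochizukiCocycle p x y y = 0) := by
  refine ⟨fun x y z w => ?_, fun x y => ?_⟩
  · obtain ⟨x, rfl⟩ := ZMod.intCast_surjective x
    obtain ⟨y, rfl⟩ := ZMod.intCast_surjective y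
    obtain ⟨z, rfl⟩ := ZMod.intCast_surjective z
    obtain ⟨w, rfl⟩ := ZMod.intCast_surjective w
    have h := dihedralCocycleDefect_map (Int.castRingHom (ZMod p))
      (mochizukiCocycle_intCast hp) x y z w
    rw [dihedralCocycleDefect_mochizukiLift hp, map_zero] at h
    exact h
  · obtain ⟨x, rfl⟩ := ZMod.intCast_surjective x
    obtain ⟨y, rfl⟩ := ZMod.intCast_surjective y
    simp [mochizukiCocycle_intCast hp, mochizukiLift, mochizukiPoly_self]

/-- For an odd prime `p`, Mochizuki's function `ψ` is a quandle 3-cocycle of the dihedral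
quandle `R_p` (`ZMod p` with `i ▷ j = 2 * j - i`). -/
theorem mochizuki_is_three_cocycle (p : ℕ) (hp : p.Prime) (hodd : Odd p) :
    (∀ x y z w : ZMod p,
      mochizukiCocycle p x z w - mochizukiCocycle p x y w + mochizukiCocycle p x y z
        - mochizukiCocycle p (2 * y - x) z w
        + mochizukiCocycle p (2 * z - x) (2 * z - y) w
        - mochizukiCocycle p (2 * w - x) (2 * w - y) (2 * w - z) = 0) ∧
    (∀ x y : ZMod p, mochizukiCocycle p x x y = 0 ∧ mochizukiCocycle p x y y = 0) :=
  mochizuki_is_three_cocycle_general p hp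
end

section
/- Let Y be a nonempty finite type, A an additive commutative monoid, k ≥ 1, and f : Fin k → Y → Multiset A a family of functions each of which is constant in its Y-argument (i.e., f i y = f i y' for all i and all y, y' ∈ Y). Then Card(Y)^(k−1) • (∑_{y ∈ Y} ⋆-∏_{i : Fin k} f i y) = ⋆-∏_{i : Fin k} (∑_{y ∈ Y} f i y), where ∑ is multiset sum (disjoint union), ⋆-∏ is the convolution product of multisets, and n • M denotes the multiset M repeated n times. (This is the algebraic identity underlying the product formula Φ(T₁ ⊔ ⋯ ⊔ T_k) = (1/|X|^{k−1})·Φ(T₁) × ⋯ × Φ(T_k) for cocycle invariants of disjoint unions of tangles whose invariants Φ(T_i, x) do not depend on the boundary color x.) -/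
/-! Since every `f i` is constant in `y`, summing over `Y` just multiplies each factor by
`card Y`. Convolution is additive in each argument, so the `k`-fold product of the sums is
`card Y ^ k` times the product at any fixed `y`, while the left side is
`card Y ^ (k - 1) * card Y` times the same product. -/

/-- Convolution of two multisets over an additive commutative monoid:
the multiset of all sums `c + d` with `c ∈ C`, `d ∈ D`, counted with multiplicity. -/
def mconv {A : Type*} [AddCommMonoid A] (C D : Multiset A) : Multiset A :=
  C.bind fun c => D.map (c + ·)

/-- The convolution product of a finite family of multisets; the empty product is `{0}`. -/
def mconvProd {A : Type*} [AddCommMonoid A] {k : ℕ} (f : Fin k → Multiset A) : Multiset A :=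
  (List.ofFn f).foldr mconv {0}

section

variable {A : Type*} [AddCommMonoid A]

lemma mconv_add_left (C C' D : Multiset A) : mconv (C + C') D = mconv C D + mconv C' D :=
  Multiset.add_bind ..

lemma mconv_add_right (C D D' : Multiset A) : mconv C (D + D') = mconv C D + mconv C D' := by
  simp only [mconv, Multiset.map_add, Multiset.bind_add]

lemma mconv_nsmul_left (n : ℕ) (C D : Multiset A) : mconv (n • C) D = n • mconv C D := by
  induction n with
  | zero => simp only [zero_nsmul, mconv, Multiset.zero_bind]
  | succ n ih => rw [succ_nsmul, succ_nsmul, mconv_add_left, ih]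

lemma mconv_nsmul_right (n : ℕ) (C D : Multiset A) : mconv C (n • D) = n • mconv C D := by
  induction n with
  | zero => simp only [zero_nsmul, mconv, Multiset.map_zero, Multiset.bind_zero]
  | succ n ih => rw [succ_nsmul, succ_nsmul, mconv_add_right, ih]

lemma mconvProd_succ {k : ℕ} (f : Fin (k + 1) → Multiset A) :
    mconvProd f = mconv (f 0) (mconvProd fun i => f i.succ) := by
  simp only [mconvProd, List.ofFn_succ, List.foldr_cons]

lemma mconvProd_nsmul (n : ℕ) {k : ℕ} (f : Fin k → Multiset A) :
    mconvProd (fun i => n • f i) = n ^ k • mconvProd f := by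
  induction k with
  | zero => simp [mconvProd]
  | succ k ih =>
    rw [mconvProd_succ, mconvProd_succ f, ih, mconv_nsmul_left, mconv_nsmul_right, smul_smul,
      pow_succ']

end

/-- If `Y` is a nonempty finite type, `k ≥ 1`, and `f : Fin k → Y → Multiset A` is a family
of functions each constant in its `Y`-argument, then
`card Y ^ (k - 1) • (∑ y, ⋆∏ i, f i y) = ⋆∏ i, (∑ y, f i y)`.
This is the identity underlying `Φ(T₁ ⊔ ⋯ ⊔ T_k) = (1/|X|^{k-1}) Φ(T₁) × ⋯ × Φ(T_k)`. -/
theorem disjoint_union_invariant_product (Y : Type*) [Fintype Y] [Nonempty Y]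
    (A : Type*) [AddCommMonoid A] (k : ℕ) (hk : 1 ≤ k)
    (f : Fin k → Y → Multiset A) (hf : ∀ (i : Fin k) (y y' : Y), f i y = f i y') :
    (Fintype.card Y) ^ (k - 1) • (∑ y : Y, mconvProd (fun i => f i y)) =
      mconvProd (fun i => ∑ y : Y, f i y) := by
  obtain ⟨y₀⟩ := ‹Nonempty Y›
  have hsum : ∀ i, ∑ y : Y, f i y = Fintype.card Y • f i y₀ := fun i => by
    rw [Fintype.sum_congr _ _ (hf i · y₀), Finset.sum_const, Finset.card_univ]
  have hsum_prod : ∑ y : Y, mconvProd (fun i => f i y) =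
      Fintype.card Y • mconvProd (fun i => f i y₀) := by
    rw [Fintype.sum_congr _ _ fun y => congrArg mconvProd (funext (hf · y y₀)), Finset.sum_const,
      Finset.card_univ]
  calc (Fintype.card Y) ^ (k - 1) • (∑ y : Y, mconvProd (fun i => f i y))
      = Fintype.card Y ^ k • mconvProd (fun i => f i y₀) := by
        rw [hsum_prod, smul_smul, ← pow_succ, Nat.sub_add_cancel hk]
    _ = mconvProd (fun i => ∑ y : Y, f i y) := by simp only [hsum, mconvProd_nsmul]
end
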